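/- arXiv:1303.4907 — 4 statements merged into one kernel-verified Lean document; each statement's English description precedes it below -/
import Mathlib

section
/- Let ρ ∈ ℂ be a primitive cube root of unity, λ ∈ ℂ nonzero with a fixed sixth root μ (μ⁶ = λ). Let n = a + b = x + y + z with a,b,x,y,z ∈ ℕ, let B ∈ GLₙ(ℂ), let D = diag(1ₓ, ρ²·1_y, ρ·1_z) (block diagonal) and E = diag(1ₐ, −1_b). Then the assignment σ₁ ↦ μ·B⁻¹DBE, σ₂ ↦ μ·E·B⁻¹DB defines a representation of B₃, i.e., the two matrices M₁ = μB⁻¹DBE and M₂ = μEB⁻¹DB satisfy the braid relation M₁M₂M₁ = M₂M₁M₂. -/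
/-!
Put `C = B⁻¹DB`. Since `ρ³ = 1` we have `D³ = 1`, hence `C³ = 1`, and `E² = 1`. Then
`(CE)(EC)(CE) = C³E = E` and `(EC)(CE)(EC) = EC³ = E`, so `CE` and `EC` satisfy the braid
relation, and multiplying both by the same scalar `μ` multiplies each side by `μ³`.
-/

open Matrix

theorem braid_mul_of_pow_three_eq_one {M : Type*} [Monoid M] {c e : M}
    (hc : c ^ 3 = 1) (he : e * e = 1) :
    c * e * (e * c) * (c * e) = e * c * (c * e) * (e * c) := by
  have hce : c * e * (e * c) * (c * e) = c ^ 3 * e := by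
    simp only [pow_succ, pow_zero, one_mul, mul_assoc, ← mul_assoc e e, he]
  have hec : e * c * (c * e) * (e * c) = e * c ^ 3 := by
    simp only [pow_succ, pow_zero, one_mul, mul_assoc, ← mul_assoc e e, he]
  rw [hce, hec, hc, one_mul, mul_one]

theorem braid_smul {R A : Type*} [CommSemiring R] [Semiring A] [Algebra R A] (μ : R) {p q : A}
    (h : p * q * p = q * p * q) :
    μ • p * (μ • q) * (μ • p) = μ • q * (μ • p) * (μ • q) := by
  simp only [smul_mul_smul_comm, h]

theorem Matrix.conj_pow_of_isUnit {n : Type*} [Fintype n] [DecidableEq n] {R : Type*} [CommRing R]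
    {B : Matrix n n R} (hB : IsUnit B) (D : Matrix n n R) (k : ℕ) :
    (B⁻¹ * D * B) ^ k = B⁻¹ * D ^ k * B := by
  obtain ⟨u, rfl⟩ := hB
  simpa only [coe_units_inv] using Units.conj_pow' u D k

theorem Matrix.diagonal_pow_eq_one {n : Type*} [Fintype n] [DecidableEq n] {R : Type*}
    [CommSemiring R] {d : n → R} {k : ℕ} (hd : ∀ i, d i ^ k = 1) : diagonal d ^ k = 1 := by
  rw [diagonal_pow, ← diagonal_one]
  exact congrArg diagonal (funext hd)

theorem stmt2_general (a b x y : ℕ)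
    (ρ : ℂ) (hρ : IsPrimitiveRoot ρ 3)
    (μ : ℂ)
    (B : Matrix (Fin (a + b)) (Fin (a + b)) ℂ) (hB : IsUnit B) :
    let D : Matrix (Fin (a + b)) (Fin (a + b)) ℂ :=
      Matrix.diagonal fun i => if (i : ℕ) < x then 1 else if (i : ℕ) < x + y then ρ ^ 2 else ρ
    let E : Matrix (Fin (a + b)) (Fin (a + b)) ℂ :=
      Matrix.diagonal fun i => if (i : ℕ) < a then 1 else -1
    let M₁ := μ • (B⁻¹ * D * B * E)
    let M₂ := μ • (E * (B⁻¹ * D * B))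
    M₁ * M₂ * M₁ = M₂ * M₁ * M₂ := by
  intro D E M₁ M₂
  have hD : D ^ 3 = 1 := diagonal_pow_eq_one fun i => by
    split_ifs
    · exact one_pow 3
    · rw [← pow_mul, mul_comm, pow_mul, hρ.pow_eq_one, one_pow]
    · exact hρ.pow_eq_one
  have hE : E * E = 1 := by
    rw [← sq, diagonal_pow_eq_one fun i => by split_ifs <;> norm_num]
  have hC : (B⁻¹ * D * B) ^ 3 = 1 := by
    rw [conj_pow_of_isUnit hB, hD, Matrix.mul_one, nonsing_inv_mul B ((isUnit_iff_isUnit_det B).mp hB)]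
  exact braid_smul μ (braid_mul_of_pow_three_eq_one hC hE)

/-- The matrices `M₁ = μ·B⁻¹DBE` and `M₂ = μ·E·B⁻¹DB` satisfy the braid relation,
where `D = diag(1ₓ, ρ²·1_y, ρ·1_z)`, `E = diag(1ₐ, −1_b)`, `ρ` a primitive cube root
of unity and `μ⁶ = λ ≠ 0`. -/
theorem stmt2 (a b x y z : ℕ) (hn : a + b = x + y + z)
    (ρ : ℂ) (hρ : IsPrimitiveRoot ρ 3)
    (lam μ : ℂ) (hlam : lam ≠ 0) (hμ : μ ^ 6 = lam)
    (B : Matrix (Fin (a + b)) (Fin (a + b)) ℂ) (hB : IsUnit B) :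
    let D : Matrix (Fin (a + b)) (Fin (a + b)) ℂ :=
      Matrix.diagonal fun i => if (i : ℕ) < x then 1 else if (i : ℕ) < x + y then ρ ^ 2 else ρ
    let E : Matrix (Fin (a + b)) (Fin (a + b)) ℂ :=
      Matrix.diagonal fun i => if (i : ℕ) < a then 1 else -1
    let M₁ := μ • (B⁻¹ * D * B * E)
    let M₂ := μ • (E * (B⁻¹ * D * B))
    M₁ * M₂ * M₁ = M₂ * M₁ * M₂ :=
  stmt2_general a b x y ρ hρ μ B hB
end

section
/- Let Σ = (A, B, C) ∈ Mₙ(ℂ) × M_{n×m}(ℂ) × M_{p×n}(ℂ) be a linear control system with m = p = 1 (so B is a column vector b and C a row vector c). Then Σ is canonical (i.e., the matrices [b, Ab, …, Aⁿ⁻¹b] and [cᵀ, (cA)ᵀ, …, (cAⁿ⁻¹)ᵀ] both have rank n) if and only if the associated quiver representation on the quiver with one loop at the right vertex, one arrow left-to-right assigned b, and one arrow right-to-left assigned c, with dimension vector (1, n), is a simple representation. -/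
/-!
View `(b, c, A)` as a representation `(ℂ, ℂⁿ)` and let `K(v) = span {v, A v, …, Aⁿ⁻¹ v}` be the
Krylov subspace of `v`; by Cayley–Hamilton it is the smallest `A`-invariant subspace containing `v`.
Full rank of the controllability matrix says `K(b) = ℂⁿ`; full rank of the observability matrix
says that no nonzero `w` has `c` vanishing on `K(w)`. A subrepresentation `(W₁, W₂)` has `W₁ = 0`
or `W₁ = ℂ`. In the first case `c` vanishes on `W₂ ⊇ K(w)` for each `w ∈ W₂`, in the second
`W₂ ⊇ K(b)`. Conversely `(ℂ, K(b))` and `(0, K(w))` are subrepresentations.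
-/

open Matrix Polynomial Submodule

namespace Matrix

variable {R : Type*}

theorem rank_eq_card_iff_range_mulVecLin_eq_top {K m ι : Type*} [Field K] [Fintype m] [Fintype ι]
    (M : Matrix m ι K) : M.rank = Fintype.card m ↔ LinearMap.range M.mulVecLin = ⊤ := by
  rw [eq_top_iff_finrank_eq, Module.finrank_fintype_fun_eq_card, rank]

theorem pow_mulVec_mem_of_forall_mulVec_mem [Semiring R] {ι : Type*} [Fintype ι] [DecidableEq ι]
    {A : Matrix ι ι R} {W : Submodule R (ι → R)} (hA : ∀ w ∈ W, A *ᵥ w ∈ W) {w : ι → R}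
    (hw : w ∈ W) (k : ℕ) : A ^ k *ᵥ w ∈ W := by
  induction k with
  | zero => simpa using hw
  | succ k ih => simpa [pow_succ', ← mulVec_mulVec] using hA _ ih

section Krylov

variable {n : ℕ} [CommRing R]

def krylovSubspace (A : Matrix (Fin n) (Fin n) R) (v : Fin n → R) :
    Submodule R (Fin n → R) :=
  span R (Set.range fun i : Fin n => A ^ (i : ℕ) *ᵥ v)

variable {A : Matrix (Fin n) (Fin n) R} {v : Fin n → R}

theorem pow_mulVec_mem_krylovSubspace (A : Matrix (Fin n) (Fin n) R) (v : Fin n → R) (k : ℕ) :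
    A ^ k *ᵥ v ∈ krylovSubspace A v := by
  nontriviality R
  obtain _ | n := n
  · exact Subsingleton.elim 0 (A ^ k *ᵥ v) ▸ zero_mem _
  have hdeg : (X ^ k %ₘ A.charpoly).natDegree < n + 1 := by
    have hne : A.charpoly ≠ 1 := fun h => by simpa [h] using A.charpoly_natDegree_eq_dim
    simpa [A.charpoly_natDegree_eq_dim] using natDegree_modByMonic_lt (X ^ k) A.charpoly_monic hne
  rw [pow_eq_aeval_mod_charpoly, aeval_eq_sum_range' hdeg, sum_mulVec]
  refine sum_mem fun i hi => ?_
  rw [smul_mulVec]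
  exact smul_mem _ _ (subset_span ⟨⟨i, Finset.mem_range.1 hi⟩, rfl⟩)

theorem self_mem_krylovSubspace (A : Matrix (Fin n) (Fin n) R) (v : Fin n → R) :
    v ∈ krylovSubspace A v := by
  simpa using pow_mulVec_mem_krylovSubspace A v 0

theorem mulVec_mem_krylovSubspace {w : Fin n → R} (hw : w ∈ krylovSubspace A v) :
    A *ᵥ w ∈ krylovSubspace A v := by
  have hmap := apply_mem_span_image_of_mem_span A.mulVecLin hw
  rw [← Set.range_comp] at hmap
  refine span_le.2 ?_ hmap
  rintro _ ⟨i, rfl⟩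
  simpa [mulVec_mulVec, ← pow_succ'] using pow_mulVec_mem_krylovSubspace A v (i + 1)

theorem krylovSubspace_le {W : Submodule R (Fin n → R)} (hv : v ∈ W)
    (hA : ∀ w ∈ W, A *ᵥ w ∈ W) : krylovSubspace A v ≤ W :=
  span_le.2 fun _ ⟨i, hi⟩ => hi ▸ pow_mulVec_mem_of_forall_mulVec_mem hA hv i

theorem dotProduct_eq_zero_of_mem_krylovSubspace {c x : Fin n → R}
    (hc : ∀ i : Fin n, c ⬝ᵥ A ^ (i : ℕ) *ᵥ v = 0) (hx : x ∈ krylovSubspace A v) : c ⬝ᵥ x = 0 := by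
  induction hx using span_induction with
  | mem _ h => obtain ⟨i, rfl⟩ := h; exact hc i
  | zero => exact dotProduct_zero c
  | add x y _ _ hx hy => rw [dotProduct_add, hx, hy, add_zero]
  | smul r x _ hx => rw [dotProduct_smul, hx, smul_zero]

end Krylov

section ControlSystem

variable {K : Type*} [Field K] {n : ℕ}

def controllabilityMatrix (A : Matrix (Fin n) (Fin n) K) (b : Fin n → K) :
    Matrix (Fin n) (Fin n) K :=
  of fun i j => (A ^ (j : ℕ) *ᵥ b) i

def observabilityMatrix (A : Matrix (Fin n) (Fin n) K) (c : Fin n → K) :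
    Matrix (Fin n) (Fin n) K :=
  of fun i j => (c ᵥ* A ^ (i : ℕ)) j

theorem rank_controllabilityMatrix_eq_iff (A : Matrix (Fin n) (Fin n) K) (b : Fin n → K) :
    (controllabilityMatrix A b).rank = n ↔ krylovSubspace A b = ⊤ := by
  have h := rank_eq_card_iff_range_mulVecLin_eq_top (controllabilityMatrix A b)
  rw [Fintype.card_fin, range_mulVecLin] at h
  exact h

theorem rank_observabilityMatrix_eq_iff (A : Matrix (Fin n) (Fin n) K) (c : Fin n → K) :
    (observabilityMatrix A c).rank = n ↔
      ∀ w : Fin n → K, (∀ i : Fin n, c ⬝ᵥ A ^ (i : ℕ) *ᵥ w = 0) → w = 0 := by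
  have hmulVec (w : Fin n → K) :
      observabilityMatrix A c *ᵥ w = fun i : Fin n => c ⬝ᵥ A ^ (i : ℕ) *ᵥ w := by
    ext i
    rw [dotProduct_mulVec]
    rfl
  have h := rank_eq_card_iff_range_mulVecLin_eq_top (observabilityMatrix A c)
  rw [Fintype.card_fin, LinearMap.range_eq_top, ← LinearMap.injective_iff_surjective,
    injective_iff_map_eq_zero] at h
  simpa only [mulVecLin_apply, hmulVec, funext_iff, Pi.zero_apply] using h

end ControlSystem

end Matrix

/-- For `m = p = 1`, a linear control system `(A, b, c)` is canonical (controllability and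
observability matrices have rank `n`) iff the associated quiver representation of dimension
vector `(1, n)` is simple. -/
theorem stmt7 (n : ℕ) (A : Matrix (Fin n) (Fin n) ℂ) (b : Fin n → ℂ) (c : Fin n → ℂ) :
    ((Matrix.of fun i j : Fin n => (A ^ (j : ℕ)).mulVec b i).rank = n ∧
     (Matrix.of fun i j : Fin n => Matrix.vecMul c (A ^ (i : ℕ)) j).rank = n) ↔
    (∀ (W₁ : Submodule ℂ ℂ) (W₂ : Submodule ℂ (Fin n → ℂ)),
      (∀ s ∈ W₁, s • b ∈ W₂) → (∀ w ∈ W₂, dotProduct c w ∈ W₁) →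
      (∀ w ∈ W₂, A.mulVec w ∈ W₂) →
      (W₁ = ⊥ ∧ W₂ = ⊥) ∨ (W₁ = ⊤ ∧ W₂ = ⊤)) := by
  change (controllabilityMatrix A b).rank = n ∧ (observabilityMatrix A c).rank = n ↔ _
  rw [rank_controllabilityMatrix_eq_iff, rank_observabilityMatrix_eq_iff]
  constructor
  · rintro ⟨hctrb, hobsv⟩ W₁ W₂ hb hc hA
    rcases eq_bot_or_eq_top W₁ with rfl | rfl
    · refine .inl ⟨rfl, (Submodule.eq_bot_iff _).2 fun w hw => hobsv w fun i => ?_⟩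
      simpa using hc _ (pow_mulVec_mem_of_forall_mulVec_mem hA hw i)
    · have hbW : b ∈ W₂ := by simpa using hb 1 trivial
      exact .inr ⟨rfl, top_le_iff.1 (hctrb ▸ krylovSubspace_le hbW hA)⟩
  · intro hsimple
    refine ⟨?_, fun w hw => ?_⟩
    · obtain ⟨htop, -⟩ | ⟨-, hK⟩ := hsimple ⊤ (krylovSubspace A b)
        (fun s _ => smul_mem _ s (self_mem_krylovSubspace A b)) (fun _ _ => trivial)
        (fun _ => mulVec_mem_krylovSubspace)
      · exact absurd htop top_ne_bot
      · exact hK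
    · obtain ⟨-, hK⟩ | ⟨hbot, -⟩ := hsimple ⊥ (krylovSubspace A w) (by simp)
        (fun _ hx => (mem_bot ℂ).2 (dotProduct_eq_zero_of_mem_krylovSubspace hw hx))
        (fun _ => mulVec_mem_krylovSubspace)
      · simpa [hK] using self_mem_krylovSubspace A w
      · exact absurd hbot bot_ne_top
end

section
/- For the quiver with two vertices of dimensions 1 and n, m arrows from the first to the second, p arrows from the second to the first, and one loop at the second vertex, equivalence classes of linear control systems Σ = (A,B,C) ∈ Mₙ(ℂ) × M_{n×m}(ℂ) × M_{p×n}(ℂ) (where Σ ∼ Σ' iff there is g ∈ GLₙ(ℂ) with A' = gAg⁻¹, B' = gB, C' = Cg⁻¹) are in bijection with isomorphism classes of representations of this quiver of dimension vector (1, n), where a representation assigns to the i-th arrow b_i the i-th column of B, to the j-th arrow c_j the j-th row of C, and A to the loop. -/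
/-!
The two equivalence relations differ only by the scalar `λ` acting on the vertex of
dimension `1`. It can be absorbed into `g`: since `λ` commutes with everything, `(λ, g)` moves a
representation exactly as the system transformation `λ⁻¹ g` moves the corresponding system.
So once the columns of `B` and the rows of `C` are read as arrows, the relations coincide.
-/

open Matrix

namespace Matrix

section CommSemiring

variable {α : Type*} [CommSemiring α] {l m n : Type*} [Fintype n]

theorem transpose_mul_apply_eq_mulVec (M : Matrix l n α) (B : Matrix n m α) (i : m) :
    (M * B)ᵀ i = M *ᵥ Bᵀ i := by
  rw [transpose_mul, mul_apply_eq_vecMul, vecMul_transpose]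

theorem eq_mul_iff_transpose_apply (B' : Matrix l m α) (M : Matrix l n α) (B : Matrix n m α) :
    B' = M * B ↔ ∀ i, B'ᵀ i = M *ᵥ Bᵀ i := by
  simp only [← transpose_mul_apply_eq_mulVec]
  exact ⟨fun h _ => h ▸ rfl, fun h => transpose_injective (funext h)⟩

theorem eq_mul_iff_apply_eq_vecMul (C' : Matrix m l α) (C : Matrix m n α) (M : Matrix n l α) :
    C' = C * M ↔ ∀ j, C' j = C j ᵥ* M :=
  funext_iff

end CommSemiring

variable {K : Type*} [Field K] {n : Type*} [Fintype n] [DecidableEq n]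

theorem inv_smul_of_ne_zero {c : K} (hc : c ≠ 0) {g : Matrix n n K} (hg : IsUnit g) :
    (c • g)⁻¹ = c⁻¹ • g⁻¹ :=
  inv_smul' g (Units.mk0 c hc) ((isUnit_iff_isUnit_det g).mp hg)

theorem smul_mul_mul_inv_smul {c : K} (hc : c ≠ 0) {g : Matrix n n K} (hg : IsUnit g)
    (A : Matrix n n K) : (c • g) * A * (c • g)⁻¹ = g * A * g⁻¹ := by
  rw [inv_smul_of_ne_zero hc hg, Matrix.smul_mul, Matrix.smul_mul, Matrix.mul_smul, smul_smul,
    mul_inv_cancel₀ hc, one_smul]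

end Matrix

variable {K : Type*} [Field K] {n m p : Type*} [Fintype n] [DecidableEq n]

def IsSimilarSystem (S S' : Matrix n n K × Matrix n m K × Matrix p n K) : Prop :=
  ∃ g : Matrix n n K, IsUnit g ∧ S'.1 = g * S.1 * g⁻¹ ∧ S'.2.1 = g * S.2.1 ∧ S'.2.2 = S.2.2 * g⁻¹

def IsIsoQuiverRep (R R' : Matrix n n K × (m → n → K) × (p → n → K)) : Prop :=
  ∃ (lam : K) (g : Matrix n n K), lam ≠ 0 ∧ IsUnit g ∧ R'.1 = g * R.1 * g⁻¹ ∧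
    (∀ i, R'.2.1 i = lam⁻¹ • g *ᵥ R.2.1 i) ∧ (∀ j, R'.2.2 j = lam • R.2.2 j ᵥ* g⁻¹)

@[simps]
def toQuiverRep :
    Matrix n n K × Matrix n m K × Matrix p n K ≃ Matrix n n K × (m → n → K) × (p → n → K) where
  toFun S := (S.1, S.2.1ᵀ, S.2.2)
  invFun R := (R.1, (of R.2.1)ᵀ, of R.2.2)
  left_inv _ := rfl
  right_inv _ := rfl

theorem isIsoQuiverRep_toQuiverRep_iff (S S' : Matrix n n K × Matrix n m K × Matrix p n K) :
    IsIsoQuiverRep (toQuiverRep S) (toQuiverRep S') ↔ IsSimilarSystem S S' := by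
  obtain ⟨A, B, C⟩ := S
  obtain ⟨A', B', C'⟩ := S'
  simp only [IsIsoQuiverRep, IsSimilarSystem, toQuiverRep_apply, ← smul_mulVec,
    ← vecMul_smul, ← eq_mul_iff_transpose_apply, ← eq_mul_iff_apply_eq_vecMul]
  constructor
  · rintro ⟨lam, g, hlam, hg, hA, hB, hC⟩
    refine ⟨lam⁻¹ • g, ?_, ?_, hB, by rw [inv_smul_of_ne_zero (inv_ne_zero hlam) hg, inv_inv, hC]⟩
    · simpa using hg.smul (Units.mk0 lam⁻¹ (inv_ne_zero hlam))
    · rw [smul_mul_mul_inv_smul (inv_ne_zero hlam) hg, hA]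
  · rintro ⟨g, hg, hA, hB, hC⟩
    exact ⟨1, g, one_ne_zero, hg, hA, by simpa using hB, by simpa using hC⟩

/-- Equivalence classes of linear control systems `(A,B,C)` under the `GLₙ(ℂ)`-action are in
bijection with isomorphism classes of representations of the quiver with dimension vector
`(1,n)` (`m` arrows left-to-right carrying the columns of `B`, `p` arrows right-to-left
carrying the rows of `C`, and a loop carrying `A`), via the natural assignment. -/
theorem stmt8 (n m p : ℕ) :
    ∃ e : Quot (fun (S S' : Matrix (Fin n) (Fin n) ℂ × Matrix (Fin n) (Fin m) ℂ ×
              Matrix (Fin p) (Fin n) ℂ) =>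
            ∃ g : Matrix (Fin n) (Fin n) ℂ, IsUnit g ∧
              S'.1 = g * S.1 * g⁻¹ ∧ S'.2.1 = g * S.2.1 ∧ S'.2.2 = S.2.2 * g⁻¹) ≃
          Quot (fun (R R' : Matrix (Fin n) (Fin n) ℂ × (Fin m → Fin n → ℂ) ×
              (Fin p → Fin n → ℂ)) =>
            ∃ (lam : ℂ) (g : Matrix (Fin n) (Fin n) ℂ), lam ≠ 0 ∧ IsUnit g ∧
              R'.1 = g * R.1 * g⁻¹ ∧
              (∀ i, R'.2.1 i = lam⁻¹ • g.mulVec (R.2.1 i)) ∧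
              (∀ j, R'.2.2 j = lam • Matrix.vecMul (R.2.2 j) g⁻¹)),
      ∀ (A : Matrix (Fin n) (Fin n) ℂ) (B : Matrix (Fin n) (Fin m) ℂ)
        (C : Matrix (Fin p) (Fin n) ℂ),
        e (Quot.mk _ (A, B, C)) =
          Quot.mk _ (A, fun i k => B k i, fun j k => C j k) :=
  ⟨Quot.congr toQuiverRep fun S S' => (isIsoQuiverRep_toQuiverRep_iff S S').symm,
    fun _ _ _ => rfl⟩
end

section
/- Suppose a group representation π : C₂*C₃ → GL(V) on a finite-dimensional complex vector space V has the property that π(s) has eigenvalue multiplicities (a, b) for eigenvalues (1, −1) and π(t) has eigenvalue multiplicities (x, y, z) for eigenvalues (1, ρ², ρ). If V is irreducible and dim V ≥ 2, then max(x,y,z) ≤ min(a,b). -/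
/-- The relations of `C₂ * C₃ = ⟨s,t | s² = e = t³⟩`. -/
def modRels : Set (FreeGroup (Fin 2)) := {FreeGroup.of 0 ^ 2, FreeGroup.of 1 ^ 3}

/-- The free product `C₂ * C₃`. -/
abbrev C2C3 := PresentedGroup modRels

def s : C2C3 := PresentedGroup.of 0
def t : C2C3 := PresentedGroup.of 1

lemma aux19 (V : Type) [AddCommGroup V] [Module ℂ V] [FiniteDimensional ℂ V]
    (π : Representation ℂ C2C3 V)
    (hirr : ∀ W : Submodule ℂ V, (∀ g : C2C3, ∀ v ∈ W, π g v ∈ W) → W = ⊥ ∨ W = ⊤)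
    (hdim : 2 ≤ Module.finrank ℂ V) (μ lam : ℂ) (hμ : μ ≠ 0) (hlam : lam ≠ 0) :
    Module.finrank ℂ (Module.End.eigenspace (π s : Module.End ℂ V) μ) +
      Module.finrank ℂ (Module.End.eigenspace (π t : Module.End ℂ V) lam)
      ≤ Module.finrank ℂ V := by
  by_contra h
  push_neg at h
  set E := Module.End.eigenspace (π s : Module.End ℂ V) μ with hE
  set F := Module.End.eigenspace (π t : Module.End ℂ V) lam with hF
  have hEF : E ⊓ F ≠ ⊥ := by
    intro hbot
    have h1 := Submodule.finrank_sup_add_finrank_inf_eq E F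
    rw [hbot, finrank_bot] at h1
    have h2 := Submodule.finrank_le (E ⊔ F)
    omega
  obtain ⟨v, hv, hv0⟩ := Submodule.exists_mem_ne_zero_of_ne_bot hEF
  set W : Submodule ℂ V := ℂ ∙ v with hW
  -- W is mapped onto itself by π s and π t
  have hmaps : W.map (π s) = W := by
    rw [hW, Submodule.map_span, Set.image_singleton]
    have : (π s) v = μ • v := (Module.End.mem_eigenspace_iff.mp hv.1)
    rw [this, Submodule.span_singleton_smul_eq (isUnit_iff_ne_zero.mpr hμ)]
  have hmapt : W.map (π t) = W := by
    rw [hW, Submodule.map_span, Set.image_singleton]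
    have : (π t) v = lam • v := (Module.End.mem_eigenspace_iff.mp hv.2)
    rw [this, Submodule.span_singleton_smul_eq (isUnit_iff_ne_zero.mpr hlam)]
  -- the stabilizer of W is a subgroup
  let H : Subgroup C2C3 :=
    { carrier := {g | W.map (π g) = W}
      one_mem' := by
        show Submodule.map (π 1) W = W
        rw [map_one, Module.End.one_eq_id, Submodule.map_id]
      mul_mem' := by
        intro g h hg hh
        simp only [Set.mem_setOf_eq] at *
        rw [map_mul, Module.End.mul_eq_comp, Submodule.map_comp, hh, hg]
      inv_mem' := by
        intro g hg
        simp only [Set.mem_setOf_eq] at *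
        conv_lhs => rw [← hg]
        rw [← Submodule.map_comp, ← Module.End.mul_eq_comp, ← map_mul,
          inv_mul_cancel, map_one, Module.End.one_eq_id, Submodule.map_id] }
  have hHtop : H = ⊤ := by
    rw [eq_top_iff, ← PresentedGroup.closure_range_of modRels]
    refine Subgroup.closure_le H |>.mpr ?_
    rintro _ ⟨i, rfl⟩
    fin_cases i
    · exact hmaps
    · exact hmapt
  have hinv : ∀ g : C2C3, ∀ w ∈ W, π g w ∈ W := by
    intro g w hw
    have hg : g ∈ H := hHtop ▸ Subgroup.mem_top g
    have : π g w ∈ W.map (π g) := Submodule.mem_map_of_mem hw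
    rwa [hg] at this
  rcases hirr W hinv with hbot | htop
  · exact hv0 (by simpa [hW, Submodule.span_singleton_eq_bot] using hbot)
  · have h1 : Module.finrank ℂ W = 1 := finrank_span_singleton hv0
    rw [htop, finrank_top] at h1
    omega

/-- If an irreducible representation of `C₂ * C₃` of dimension `≥ 2` has eigenvalue
multiplicities `(a,b)` for `π(s)` (eigenvalues `1, −1`) and `(x,y,z)` for `π(t)`
(eigenvalues `1, ρ², ρ`), then `max(x,y,z) ≤ min(a,b)`. -/
theorem stmt19 (V : Type) [AddCommGroup V] [Module ℂ V] [FiniteDimensional ℂ V]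
    (π : Representation ℂ C2C3 V) (ρ : ℂ) (hρ : IsPrimitiveRoot ρ 3)
    (a b x y z : ℕ)
    (ha : Module.finrank ℂ (Module.End.eigenspace (π s : Module.End ℂ V) 1) = a)
    (hb : Module.finrank ℂ (Module.End.eigenspace (π s : Module.End ℂ V) (-1)) = b)
    (hx : Module.finrank ℂ (Module.End.eigenspace (π t : Module.End ℂ V) 1) = x)
    (hy : Module.finrank ℂ (Module.End.eigenspace (π t : Module.End ℂ V) (ρ ^ 2)) = y)
    (hz : Module.finrank ℂ (Module.End.eigenspace (π t : Module.End ℂ V) ρ) = z)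
    (hab : a + b = Module.finrank ℂ V) (hxyz : x + y + z = Module.finrank ℂ V)
    (hirr : ∀ W : Submodule ℂ V, (∀ g : C2C3, ∀ v ∈ W, π g v ∈ W) → W = ⊥ ∨ W = ⊤)
    (hdim : 2 ≤ Module.finrank ℂ V) :
    max x (max y z) ≤ min a b := by
  have hρ0 : ρ ≠ 0 := hρ.ne_zero (by norm_num)
  have hρ20 : ρ ^ 2 ≠ 0 := pow_ne_zero _ hρ0
  have h1 : (1 : ℂ) ≠ 0 := one_ne_zero
  have hm1 : (-1 : ℂ) ≠ 0 := by norm_num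
  have k := aux19 V π hirr hdim
  have i1 := k 1 1 h1 h1
  have i2 := k 1 (ρ^2) h1 hρ20
  have i3 := k 1 ρ h1 hρ0
  have i4 := k (-1) 1 hm1 h1
  have i5 := k (-1) (ρ^2) hm1 hρ20
  have i6 := k (-1) ρ hm1 hρ0
  rw [ha, hx] at i1; rw [ha, hy] at i2; rw [ha, hz] at i3
  rw [hb, hx] at i4; rw [hb, hy] at i5; rw [hb, hz] at i6
  omega
end
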